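/- Convex limiting produces an invariant domain: let L be a nonempty finite set and for each l ∈ L let Ψ^l : ℝ^m → ℝ be quasiconcave and continuous; set B := {U ∈ ℝ^m : Ψ^l(U) ≥ 0 for all l ∈ L}. In the abstract scheme setting, assume for all i ∈ V: (a) U_i^n ∈ B; (b) Ū_ij ∈ B for all j ≠ i; (c) U_i^n + 2τ S(U_i^n) ∈ B; (d) 1 + 4τ d_ii/m_i ≥ 0. Let A_ij ∈ ℝ^m be skew-symmetric (A_ij = −A_ji), let (λ_j)_{j≠i} be positive reals with ∑_{j≠i} λ_j = 1, and set P_ij := A_ij/(m_i λ_j). For each l ∈ L set Ψ_i^{l,min} := min( Ψ^l(U_i^n + 2τ S(U_i^n)), min_{j∈V} Ψ^l(Ū_ij) ) and Ψ_i^l := Ψ^l − Ψ_i^{l,min}; define ℓ_j^{i,l} := 1 if Ψ_i^l(U_i^{L,n+1} + P_ij) ≥ 0 and ℓ_j^{i,l} := max{ℓ ∈ [0,1] : Ψ_i^l(U_i^{L,n+1} + ℓ P_ij) ≥ 0} otherwise; set ℓ_ij := min( min_{l∈L} ℓ_j^{i,l}, min_{l∈L} ℓ_i^{j,l} ) and U_i^{n+1}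 := ∑_{j≠i} λ_j ( U_i^{L,n+1} + ℓ_ij P_ij ). Then U_i^{n+1} ∈ B for every i ∈ V. -/

import Mathlib

/-!
The low-order update is the midpoint of the source step `U_i + 2τ S(U_i)` and of
`U_i + ∑_{j ≠ i} (4τ d_ij / m_i) (Ū_ij - U_i)`, which by the CFL condition (d) is a convex
combination of `U_i` and the bar states. So `U_i^{L,n+1}` lies in every convex upper level set
of `Ψ^l` containing these states, in particular in `{Ψ^l ≥ Ψ_i^{l,min}}`, and `Ψ_i^{l,min} ≥ 0`
by (a)–(c). A limited state `U_i^{L,n+1} + ℓ_ij P_ij` lies on the segment from `U_i^{L,n+1}` to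
a point that the limiter `ℓ_j^{i,l} ≥ ℓ_ij` keeps in that level set, and the new state is a
convex combination of the limited states.
-/

open Finset

section Convex

variable {E : Type*} [AddCommGroup E] [Module ℝ E] {C : Set E}

theorem Convex.add_smul_mem_of_le (hC : Convex ℝ C) {a p : E} {e x : ℝ} (ha : a ∈ C)
    (hb : a + e • p ∈ C) (hx : 0 ≤ x) (hxe : x ≤ e) : a + x • p ∈ C := by
  rcases (hx.trans hxe).eq_or_lt with rfl | he
  · rwa [le_antisymm hxe hx, zero_smul, add_zero]
  · have hmem := hC.add_smul_mem ha hb ⟨div_nonneg hx he.le, (div_le_one he).2 hxe⟩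
    rwa [smul_smul, div_mul_cancel₀ _ he.ne'] at hmem

theorem Convex.add_sum_smul_sub_mem (hC : Convex ℝ C) {ι : Type*} {s : Finset ι} {x : E}
    {y : ι → E} {w : ι → ℝ} (hx : x ∈ C) (hy : ∀ j ∈ s, y j ∈ C) (hw : ∀ j ∈ s, 0 ≤ w j)
    (hw₁ : ∑ j ∈ s, w j ≤ 1) : x + ∑ j ∈ s, w j • (y j - x) ∈ C := by
  have hcomb : x + ∑ j ∈ s, w j • (y j - x)
      = ∑ o ∈ s.insertNone, o.elim (1 - ∑ j ∈ s, w j) w • o.elim x y := by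
    simp only [sum_insertNone, Option.elim, smul_sub, sum_sub_distrib, ← sum_smul]
    module
  rw [hcomb]
  refine hC.sum_mem ?_ (by simp [sum_insertNone]) ?_
  · rintro (_ | j) hj
    · simpa using hw₁
    · exact hw j (by simpa using hj)
  · rintro (_ | j) hj
    · exact hx
    · exact hy j (by simpa using hj)

/-- The paper's `ℓ_j^{i,l}`, for `ψ = Ψ^l`, `χ = Ψ_i^{l,min}`, `a = U_i^{L,n+1}`, `p = P_ij`. -/
def IsLineLimiter (ψ : E → ℝ) (χ : ℝ) (a p : E) (ℓ : ℝ) : Prop :=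
  (0 ≤ ψ (a + p) - χ ∧ ℓ = 1) ∨
    (¬ 0 ≤ ψ (a + p) - χ ∧ IsGreatest {x | x ∈ Set.Icc (0 : ℝ) 1 ∧ 0 ≤ ψ (a + x • p) - χ} ℓ)

namespace IsLineLimiter

variable {ψ : E → ℝ} {χ : ℝ} {a p : E} {ℓ : ℝ}

theorem nonneg (h : IsLineLimiter ψ χ a p ℓ) : 0 ≤ ℓ := by
  rcases h with ⟨-, rfl⟩ | ⟨-, hℓ⟩
  exacts [zero_le_one, hℓ.1.1.1]

theorem le_apply_add_smul (h : IsLineLimiter ψ χ a p ℓ) (hψ : Convex ℝ {W | χ ≤ ψ W})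
    (ha : χ ≤ ψ a) {x : ℝ} (hx : 0 ≤ x) (hxℓ : x ≤ ℓ) : χ ≤ ψ (a + x • p) := by
  refine hψ.add_smul_mem_of_le ha ?_ hx hxℓ
  rcases h with ⟨hp, rfl⟩ | ⟨-, hℓ⟩
  · simpa [sub_nonneg] using hp
  · exact sub_nonneg.1 hℓ.1.2

end IsLineLimiter

theorem Convex.lowOrder_mem (hC : Convex ℝ C) {ι : Type*} {s : Finset ι} {u src ul : E}
    {ubar : ι → E} {D : ι → ℝ} {τ μ : ℝ} (hτ : 0 ≤ τ) (hμ : 0 ≤ μ) (hD : ∀ j ∈ s, 0 ≤ D j)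
    (hCFL : 0 ≤ 1 + 4 * τ * (-∑ j ∈ s, D j) / μ)
    (hul : ul = u + τ • src + (2 * τ / μ) • ∑ j ∈ s, D j • (ubar j - u))
    (hu : u ∈ C) (hsrc : u + (2 * τ) • src ∈ C) (hbar : ∀ j ∈ s, ubar j ∈ C) : ul ∈ C := by
  have hw : ∀ j ∈ s, 0 ≤ 4 * τ / μ * D j := fun j hj => by
    have := hD j hj
    positivity
  have hw₁ : ∑ j ∈ s, 4 * τ / μ * D j ≤ 1 := by
    rw [← mul_sum]
    linarith [show 4 * τ * (-∑ j ∈ s, D j) / μ = -(4 * τ / μ * ∑ j ∈ s, D j) by ring]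
  have hmid : ul = (1 / 2 : ℝ) • (u + (2 * τ) • src)
      + (1 / 2 : ℝ) • (u + ∑ j ∈ s, (4 * τ / μ * D j) • (ubar j - u)) := by
    simp only [hul, mul_smul, ← smul_sum]
    module
  rw [hmid]
  exact hC hsrc (hC.add_sum_smul_sub_mem hu hbar hw hw₁) (by norm_num) (by norm_num) (by norm_num)

end Convex

section Scheme

variable {V m n : Type*} [Fintype V] [DecidableEq V] [Fintype n]

theorem Matrix.sum_mulVec_eq_sum_erase_sub_mulVec (F : V → Matrix m n ℝ) {c : V → n → ℝ}
    (hc : ∑ j, c j = 0) (i : V) :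
    ∑ j, (F j).mulVec (c j) = ∑ j ∈ univ.erase i, (F j - F i).mulVec (c j) := by
  have hFi : ∑ j, (F i).mulVec (c j) = 0 := by
    rw [← Matrix.mulVec_sum, hc, Matrix.mulVec_zero]
  rw [sum_erase _ (by simp), ← sub_zero (∑ j, (F j).mulVec (c j)), ← hFi, ← sum_sub_distrib]
  simp only [Matrix.sub_mulVec]

theorem lowOrder_eq_of_scheme {i : V} {u : V → m → ℝ} {ul src : m → ℝ} {F : V → Matrix m n ℝ}
    {c : V → n → ℝ} {D : V → ℝ} {ubar : V → m → ℝ} {μ τ : ℝ} (hμ : μ ≠ 0) (hτ : τ ≠ 0)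
    (hc : ∑ j, c j = 0) (hD : ∀ j ∈ univ.erase i, D j ≠ 0)
    (hbar : ∀ j ∈ univ.erase i,
      ubar j = (1 / 2 : ℝ) • (u i + u j) - (1 / (2 * D j)) • ((F j - F i).mulVec (c j)))
    (hscheme : (μ / τ) • (ul - u i) + ∑ j, (F j).mulVec (c j)
      - ∑ j ∈ univ.erase i, D j • (u j - u i) = μ • src) :
    ul = u i + τ • src + (2 * τ / μ) • ∑ j ∈ univ.erase i, D j • (ubar j - u i) := by
  have hedge : ∀ j ∈ univ.erase i,
      D j • (u j - u i) - (F j - F i).mulVec (c j) = (2 * D j) • (ubar j - u i) := by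
    intro j hj
    have hflux : (F j - F i).mulVec (c j) = (2 * D j) • ((1 / 2 : ℝ) • (u i + u j) - ubar j) := by
      rw [hbar j hj, sub_sub_cancel, smul_smul, mul_one_div_cancel (by simpa using hD j hj),
        one_smul]
    rw [hflux]
    module
  have hsum : ∑ j ∈ univ.erase i, (D j • (u j - u i) - (F j - F i).mulVec (c j))
      = ∑ j ∈ univ.erase i, (2 * D j) • (ubar j - u i) := sum_congr rfl hedge
  simp only [sum_sub_distrib, mul_smul, ← smul_sum] at hsum
  rw [Matrix.sum_mulVec_eq_sum_erase_sub_mulVec F hc i] at hscheme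
  have hscaled : (μ / τ) • (ul - u i)
      = μ • src + (2 : ℝ) • ∑ j ∈ univ.erase i, D j • (ubar j - u i) := by
    linear_combination (norm := module) hscheme + hsum
  calc ul = u i + (τ / μ) • ((μ / τ) • (ul - u i)) := by
        rw [smul_smul, div_mul_div_cancel₀ hμ, div_self hτ, one_smul, add_sub_cancel]
    _ = u i + τ • src + (2 * τ / μ) • ∑ j ∈ univ.erase i, D j • (ubar j - u i) := by
        rw [hscaled, smul_add, smul_smul, div_mul_cancel₀ τ hμ, smul_smul]
        module

end Scheme

theorem convex_limiting_invariant_domain_general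
    (m d : ℕ)
    (V : Type) [Fintype V] [DecidableEq V] [Nonempty V]
    (M : V → ℝ) (hM : ∀ i, 0 < M i)
    (c : V → V → Fin d → ℝ)
    (hcsum : ∀ i, ∑ j, c i j = 0)
    (f : (Fin m → ℝ) → Matrix (Fin m) (Fin d) ℝ)
    (S : (Fin m → ℝ) → (Fin m → ℝ))
    (dL : V → V → ℝ)
    (hdpos : ∀ i j, i ≠ j → 0 < dL i j)
    (U UL : V → Fin m → ℝ)
    (τ : ℝ) (hτ : 0 < τ)
    (hscheme : ∀ i, (M i / τ) • (UL i - U i) + ∑ j, (f (U j)).mulVec (c i j)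
        - ∑ j ∈ univ.erase i, dL i j • (U j - U i) = M i • S (U i))
    (Ubar : V → V → Fin m → ℝ)
    (hUbar : ∀ i j, i ≠ j → Ubar i j = (1/2 : ℝ) • (U i + U j)
        - (1 / (2 * dL i j)) • ((f (U j) - f (U i)).mulVec (c i j)))
    (hUbarDiag : ∀ i, Ubar i i = U i)
    -- the family of quasiconcave continuous functionals and the set B
    (ι : Type) [Fintype ι] [Nonempty ι]
    (Ψ : ι → (Fin m → ℝ) → ℝ)
    (hΨqc : ∀ l, ∀ χ : ℝ, Convex ℝ {W | χ ≤ Ψ l W})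
    (B : Set (Fin m → ℝ))
    (hBdef : B = {W | ∀ l, 0 ≤ Ψ l W})
    -- invariance hypotheses (a)-(d)
    (hU : ∀ i, U i ∈ B)
    (hbar : ∀ i, ∀ j ∈ univ.erase i, Ubar i j ∈ B)
    (hsrc : ∀ i, U i + (2 * τ) • S (U i) ∈ B)
    (hCFL : ∀ i, 0 ≤ 1 + 4 * τ * (-(∑ j ∈ univ.erase i, dL i j)) / M i)
    -- skew-symmetric fluxes, convex coefficients, and limiting directions
    (lam : V → V → ℝ)
    (hlampos : ∀ i, ∀ j ∈ univ.erase i, 0 < lam i j)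
    (hlamsum : ∀ i, ∑ j ∈ univ.erase i, lam i j = 1)
    (P : V → V → Fin m → ℝ)
    -- the bounds and the limiters
    (Ψmin : V → ι → ℝ)
    (hΨmin : ∀ i l, Ψmin i l = min (Ψ l (U i + (2 * τ) • S (U i)))
        (univ.inf' univ_nonempty (fun j => Ψ l (Ubar i j))))
    (ell : V → V → ι → ℝ)
    (hell : ∀ i, ∀ j ∈ univ.erase i, ∀ l,
        (0 ≤ Ψ l (UL i + P i j) - Ψmin i l ∧ ell i j l = 1)
      ∨ (¬ 0 ≤ Ψ l (UL i + P i j) - Ψmin i l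
          ∧ IsGreatest {x | x ∈ Set.Icc (0:ℝ) 1
              ∧ 0 ≤ Ψ l (UL i + x • P i j) - Ψmin i l} (ell i j l)))
    (lij : V → V → ℝ)
    (hlij : ∀ i j, i ≠ j → lij i j =
        min (univ.inf' univ_nonempty (fun l => ell i j l))
            (univ.inf' univ_nonempty (fun l => ell j i l)))
    -- the limited update
    (Unew : V → Fin m → ℝ)
    (hUnew : ∀ i, Unew i = ∑ j ∈ univ.erase i, lam i j • (UL i + lij i j • P i j)) :
    ∀ i, Unew i ∈ B := by
  subst hBdef
  intro i l
  have hlim : ∀ i, ∀ j ∈ univ.erase i, ∀ l,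
      IsLineLimiter (Ψ l) (Ψmin i l) (UL i) (P i j) (ell i j l) := hell
  have hne : ∀ {j}, j ∈ univ.erase i → i ≠ j := fun hj => (ne_of_mem_erase hj).symm
  have hmin_le_bar : ∀ j, Ψmin i l ≤ Ψ l (Ubar i j) := fun j =>
    (hΨmin i l).trans_le ((min_le_right _ _).trans (inf'_le _ (mem_univ j)))
  have hmin_nonneg : 0 ≤ Ψmin i l := by
    rw [hΨmin]
    refine le_min (hsrc i l) (le_inf' _ _ fun j _ => ?_)
    rcases eq_or_ne j i with rfl | hji
    · exact hUbarDiag j ▸ hU j l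
    · exact hbar i j (mem_erase.2 ⟨hji, mem_univ j⟩) l
  have hD : ∀ j ∈ univ.erase i, 0 < dL i j := fun j hj => hdpos i j (hne hj)
  have hULeq := lowOrder_eq_of_scheme (hM i).ne' hτ.ne' (hcsum i) (fun j hj => (hD j hj).ne')
    (fun j hj => hUbar i j (hne hj)) (hscheme i)
  have hUL : Ψmin i l ≤ Ψ l (UL i) :=
    (hΨqc l (Ψmin i l)).lowOrder_mem hτ.le (hM i).le (fun j hj => (hD j hj).le) (hCFL i) hULeq
      (hUbarDiag i ▸ hmin_le_bar i) ((hΨmin i l).trans_le (min_le_left _ _))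
      (fun j _ => hmin_le_bar j)
  have hlimited : ∀ j ∈ univ.erase i, 0 ≤ Ψ l (UL i + lij i j • P i j) := by
    intro j hj
    have hlij_nonneg : 0 ≤ lij i j := by
      rw [hlij i j (hne hj)]
      exact le_min (le_inf' _ _ fun l' _ => (hlim i j hj l').nonneg)
        (le_inf' _ _ fun l' _ => (hlim j i (mem_erase.2 ⟨hne hj, mem_univ i⟩) l').nonneg)
    have hlij_le : lij i j ≤ ell i j l := by
      rw [hlij i j (hne hj)]
      exact (min_le_left _ _).trans (inf'_le _ (mem_univ l))
    exact hmin_nonneg.trans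
      ((hlim i j hj l).le_apply_add_smul (hΨqc l _) hUL hlij_nonneg hlij_le)
  rw [hUnew i]
  exact (hΨqc l 0).sum_mem (fun j hj => (hlampos i j hj).le) (hlamsum i) hlimited

/-- Convex limiting produces an invariant domain
`B = {U : Ψ^l(U) ≥ 0 for all l}`. -/
theorem convex_limiting_invariant_domain
    (m d : ℕ) (hm : 1 ≤ m) (hd : 1 ≤ d)
    (V : Type) [Fintype V] [DecidableEq V] [Nonempty V]
    (M : V → ℝ) (hM : ∀ i, 0 < M i)
    (c : V → V → Fin d → ℝ)
    (hcskew : ∀ i j, c i j = - c j i)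
    (hcsum : ∀ i, ∑ j, c i j = 0)
    (f : (Fin m → ℝ) → Matrix (Fin m) (Fin d) ℝ)
    (S : (Fin m → ℝ) → (Fin m → ℝ))
    (dL : V → V → ℝ)
    (hdsym : ∀ i j, i ≠ j → dL i j = dL j i)
    (hdpos : ∀ i j, i ≠ j → 0 < dL i j)
    (U UL : V → Fin m → ℝ)
    (τ : ℝ) (hτ : 0 < τ)
    (hscheme : ∀ i, (M i / τ) • (UL i - U i) + ∑ j, (f (U j)).mulVec (c i j)
        - ∑ j ∈ univ.erase i, dL i j • (U j - U i) = M i • S (U i))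
    (Ubar : V → V → Fin m → ℝ)
    (hUbar : ∀ i j, i ≠ j → Ubar i j = (1/2 : ℝ) • (U i + U j)
        - (1 / (2 * dL i j)) • ((f (U j) - f (U i)).mulVec (c i j)))
    (hUbarDiag : ∀ i, Ubar i i = U i)
    -- the family of quasiconcave continuous functionals and the set B
    (ι : Type) [Fintype ι] [Nonempty ι]
    (Ψ : ι → (Fin m → ℝ) → ℝ)
    (hΨqc : ∀ l, ∀ χ : ℝ, Convex ℝ {W | χ ≤ Ψ l W})
    (hΨcont : ∀ l, Continuous (Ψ l))
    (B : Set (Fin m → ℝ))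
    (hBdef : B = {W | ∀ l, 0 ≤ Ψ l W})
    -- invariance hypotheses (a)-(d)
    (hU : ∀ i, U i ∈ B)
    (hbar : ∀ i, ∀ j ∈ univ.erase i, Ubar i j ∈ B)
    (hsrc : ∀ i, U i + (2 * τ) • S (U i) ∈ B)
    (hCFL : ∀ i, 0 ≤ 1 + 4 * τ * (-(∑ j ∈ univ.erase i, dL i j)) / M i)
    -- skew-symmetric fluxes, convex coefficients, and limiting directions
    (A : V → V → Fin m → ℝ)
    (hAskew : ∀ i j, i ≠ j → A i j = - A j i)
    (lam : V → V → ℝ)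
    (hlampos : ∀ i, ∀ j ∈ univ.erase i, 0 < lam i j)
    (hlamsum : ∀ i, ∑ j ∈ univ.erase i, lam i j = 1)
    (P : V → V → Fin m → ℝ)
    (hP : ∀ i j, i ≠ j → P i j = (M i * lam i j)⁻¹ • A i j)
    -- the bounds and the limiters
    (Ψmin : V → ι → ℝ)
    (hΨmin : ∀ i l, Ψmin i l = min (Ψ l (U i + (2 * τ) • S (U i)))
        (univ.inf' univ_nonempty (fun j => Ψ l (Ubar i j))))
    (ell : V → V → ι → ℝ)
    (hell : ∀ i, ∀ j ∈ univ.erase i, ∀ l,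
        (0 ≤ Ψ l (UL i + P i j) - Ψmin i l ∧ ell i j l = 1)
      ∨ (¬ 0 ≤ Ψ l (UL i + P i j) - Ψmin i l
          ∧ IsGreatest {x | x ∈ Set.Icc (0:ℝ) 1
              ∧ 0 ≤ Ψ l (UL i + x • P i j) - Ψmin i l} (ell i j l)))
    (lij : V → V → ℝ)
    (hlij : ∀ i j, i ≠ j → lij i j =
        min (univ.inf' univ_nonempty (fun l => ell i j l))
            (univ.inf' univ_nonempty (fun l => ell j i l)))
    -- the limited update
    (Unew : V → Fin m → ℝ)
    (hUnew : ∀ i, Unew i = ∑ j ∈ univ.erase i, lam i j • (UL i + lij i j • P i j)) :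
    ∀ i, Unew i ∈ B :=
  convex_limiting_invariant_domain_general m d V M hM c hcsum f S dL hdpos U UL τ hτ hscheme Ubar
    hUbar hUbarDiag ι Ψ hΨqc B hBdef hU hbar hsrc hCFL lam hlampos hlamsum P Ψmin hΨmin ell hell lij
    hlij Unew hUnew
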